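/- Let each f_t : ℝ^d → ℝ, t = 1, …, T, be convex and differentiable with ‖∇f_t(w)‖ ≤ G for all w ∈ 𝒟, let w_1 ∈ 𝒟, and define iterates of online gradient descent by w_{t+1} = Π(w_t − η·∇f_t(w_t)) with step size η = D/(G√T). If the switching budget S satisfies D√T ≤ S ≤ D·T, then the continuous switching constraint Σ_{t=2}^T ‖w_t − w_{t−1}‖ ≤ S holds, and the regret satisfies R = Σ_{t=1}^T f_t(w_t) − min_{w ∈ 𝒟} Σ_{t=1}^T f_t(w) ≤ D·G·√T. -/

import Mathlib

/-!
Convexity bounds each round's loss gap `f_t(w_t) - f_t(v)` by `⟪∇f_t(w_t), w_t - v⟫`. Since the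
projection onto the ball is nonexpansive towards points of the ball, expanding
`‖w_t - η∇f_t(w_t) - v‖²` bounds this inner product by
`(‖w_t - v‖² - ‖w_{t+1} - v‖²) / (2η) + ηG²/2`, which telescopes to `D²/(2η) + TηG²/2 = DG√T`.
The same nonexpansiveness gives `‖w_{t+1} - w_t‖ ≤ ηG = D/√T`, so the total movement is at
most `D√T ≤ S`.
-/

open scoped InnerProductSpace BigOperators

noncomputable def ballProj (d : ℕ) (D : ℝ) (p : EuclideanSpace ℝ (Fin d)) :
    EuclideanSpace ℝ (Fin d) :=
  if ‖p‖ ≤ D / 2 then p else (D / (2 * ‖p‖)) • p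

open Finset

theorem Finset.sum_Icc_sub_le_sub_of_succ_le {α : Type*} [AddCommGroup α] [PartialOrder α]
    [IsOrderedAddMonoid α] (a b : ℕ → α) {T : ℕ} (hT : 1 ≤ T)
    (h : ∀ t ∈ Icc 1 (T - 1), a (t + 1) ≤ b t) :
    ∑ t ∈ Icc 1 T, (a t - b t) ≤ a 1 - b T := by
  induction T, hT using Nat.le_induction with
  | base => simp
  | succ n hn ih =>
    rw [sum_Icc_succ_top (by omega)]
    have hn' : a (n + 1) ≤ b n := h n (mem_Icc.mpr ⟨hn, by omega⟩)
    calc ∑ t ∈ Icc 1 n, (a t - b t) + (a (n + 1) - b (n + 1))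
        ≤ a 1 - b n + (a (n + 1) - b (n + 1)) :=
          add_le_add_left (ih fun t ht => h t (by simp at ht ⊢; omega)) _
      _ = a 1 - b (n + 1) + (a (n + 1) - b n) := by abel
      _ ≤ a 1 - b (n + 1) := add_le_of_nonpos_right (sub_nonpos.mpr hn')

theorem ConvexOn.add_fderiv_sub_le {E : Type*} [NormedAddCommGroup E] [NormedSpace ℝ E]
    {s : Set E} {f : E → ℝ} {f' : E →L[ℝ] ℝ} {x y : E}
    (hf : ConvexOn ℝ s f) (hx : x ∈ s) (hy : y ∈ s) (hf' : HasFDerivAt f f' x) :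
    f x + f' (y - x) ≤ f y := by
  have hline : ConvexOn ℝ (AffineMap.lineMap (k := ℝ) x y ⁻¹' s) (f ∘ AffineMap.lineMap x y) :=
    hf.comp_affineMap _
  have hderiv : HasDerivAt (f ∘ AffineMap.lineMap (k := ℝ) x y) (f' (y - x)) 0 := by
    refine HasFDerivAt.comp_hasDerivAt (0 : ℝ) ?_ AffineMap.hasDerivAt_lineMap
    simpa using hf'
  have := hline.le_slope_of_hasDerivWithinAt (x := 0) (y := 1) (by simpa using hx)
    (by simpa using hy) zero_lt_one hderiv.hasDerivWithinAt
  simpa [slope_def_field, le_sub_iff_add_le'] using this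

section InnerProductSpace

variable {E : Type*} [NormedAddCommGroup E] [InnerProductSpace ℝ E]

theorem ConvexOn.add_inner_gradient_sub_le [CompleteSpace E] {s : Set E} {f : E → ℝ} {x y : E}
    (hf : ConvexOn ℝ s f) (hx : x ∈ s) (hy : y ∈ s) (hd : DifferentiableAt ℝ f x) :
    f x + ⟪gradient f x, y - x⟫_ℝ ≤ f y :=
  hf.add_fderiv_sub_le hx hy hd.hasGradientAt.hasFDerivAt

theorem norm_sub_smul_sub_sq (x g v : E) (η : ℝ) :
    ‖x - η • g - v‖ ^ 2 = ‖x - v‖ ^ 2 - 2 * η * ⟪g, x - v⟫_ℝ + η ^ 2 * ‖g‖ ^ 2 := by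
  rw [sub_right_comm, norm_sub_sq_real, real_inner_smul_right, real_inner_comm, norm_smul,
    Real.norm_eq_abs, mul_pow, sq_abs]
  ring

theorem sum_inner_sub_le_of_projected_steps {w g : ℕ → E} {v : E} {η G D : ℝ} {T : ℕ}
    (hη : 0 < η) (hT : 1 ≤ T) (hw1 : ‖w 1 - v‖ ≤ D) (hg : ∀ t ∈ Icc 1 T, ‖g t‖ ≤ G)
    (hstep : ∀ t ∈ Icc 1 (T - 1), ‖w (t + 1) - v‖ ≤ ‖w t - η • g t - v‖) :
    ∑ t ∈ Icc 1 T, ⟪g t, w t - v⟫_ℝ ≤ D ^ 2 / (2 * η) + T * (η * G ^ 2 / 2) := by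
  set a : ℕ → ℝ := fun t => ‖w t - v‖ ^ 2
  set b : ℕ → ℝ := fun t => ‖w t - η • g t - v‖ ^ 2
  have hterm : ∀ t ∈ Icc 1 T, ⟪g t, w t - v⟫_ℝ ≤ (a t - b t) / (2 * η) + η * G ^ 2 / 2 := by
    intro t ht
    have hgt : ‖g t‖ ^ 2 ≤ G ^ 2 := pow_le_pow_left₀ (norm_nonneg _) (hg t ht) 2
    rw [div_add' _ _ _ (by positivity), le_div_iff₀ (by positivity)]
    simp only [a, b, norm_sub_smul_sub_sq]
    nlinarith
  have ha1 : a 1 ≤ D ^ 2 := pow_le_pow_left₀ (norm_nonneg _) hw1 2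
  have hbT : 0 ≤ b T := sq_nonneg _
  have htel : ∑ t ∈ Icc 1 T, (a t - b t) ≤ a 1 - b T :=
    sum_Icc_sub_le_sub_of_succ_le a b hT fun t ht => pow_le_pow_left₀ (norm_nonneg _) (hstep t ht) 2
  calc ∑ t ∈ Icc 1 T, ⟪g t, w t - v⟫_ℝ
      ≤ ∑ t ∈ Icc 1 T, ((a t - b t) / (2 * η) + η * G ^ 2 / 2) := sum_le_sum hterm
    _ = (∑ t ∈ Icc 1 T, (a t - b t)) / (2 * η) + T * (η * G ^ 2 / 2) := by
      rw [sum_add_distrib, ← sum_div, sum_const, Nat.card_Icc, nsmul_eq_mul, Nat.add_sub_cancel]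
    _ ≤ D ^ 2 / (2 * η) + T * (η * G ^ 2 / 2) := by
      gcongr
      linarith

end InnerProductSpace

theorem norm_ballProj_le {d : ℕ} {D : ℝ} (hD : 0 ≤ D) (p : EuclideanSpace ℝ (Fin d)) :
    ‖ballProj d D p‖ ≤ D / 2 := by
  unfold ballProj
  split_ifs with h
  · exact h
  · have hp : 0 < ‖p‖ := by linarith
    rw [norm_smul, Real.norm_eq_abs, abs_of_nonneg (by positivity)]
    field_simp
    rfl

theorem norm_ballProj_sub_le {d : ℕ} {D : ℝ} (p : EuclideanSpace ℝ (Fin d))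
    {q : EuclideanSpace ℝ (Fin d)} (hq : ‖q‖ ≤ D / 2) : ‖ballProj d D p - q‖ ≤ ‖p - q‖ := by
  unfold ballProj
  split_ifs with h
  · exact le_rfl
  · have hD : 0 ≤ D := by linarith [norm_nonneg q]
    have hp : 0 < ‖p‖ := (norm_nonneg q).trans_lt (hq.trans_lt (not_le.mp h))
    set c : ℝ := D / (2 * ‖p‖)
    have hc : c * ‖p‖ = D / 2 := by simp only [c]; field_simp
    have hc0 : 0 ≤ c := by positivity
    have hc1 : c ≤ 1 := by rw [div_le_one (by positivity)]; linarith
    have hpq : ⟪p, q⟫_ℝ ≤ ‖p‖ * (D / 2) :=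
      (real_inner_le_norm p q).trans (mul_le_mul_of_nonneg_left hq hp.le)
    rw [← sq_le_sq₀ (norm_nonneg _) (norm_nonneg _), norm_sub_sq_real, norm_sub_sq_real, norm_smul,
      real_inner_smul_left, Real.norm_eq_abs, abs_of_nonneg hc0]
    nlinarith [sq_nonneg (1 - c)]

section BallSteps

variable {d T : ℕ} {D η G : ℝ} {w g : ℕ → EuclideanSpace ℝ (Fin d)}

theorem norm_le_of_ballProj_steps (hD : 0 ≤ D) (hw1 : ‖w 1‖ ≤ D / 2)
    (hupd : ∀ t ∈ Icc 1 (T - 1), w (t + 1) = ballProj d D (w t - η • g t)) :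
    ∀ t ∈ Icc 1 T, ‖w t‖ ≤ D / 2 := by
  rintro (_ | _ | s) ht
  · simp at ht
  · exact hw1
  · rw [hupd (s + 1) (by simp at ht ⊢; omega)]
    exact norm_ballProj_le hD _

theorem sum_norm_sub_le_of_ballProj_steps (hη : 0 ≤ η)
    (hmem : ∀ t ∈ Icc 1 T, ‖w t‖ ≤ D / 2) (hg : ∀ t ∈ Icc 1 T, ‖g t‖ ≤ G)
    (hupd : ∀ t ∈ Icc 1 (T - 1), w (t + 1) = ballProj d D (w t - η • g t)) :
    ∑ t ∈ Icc 2 T, ‖w t - w (t - 1)‖ ≤ (T - 1 : ℕ) * (η * G) := by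
  have hstep : ∀ t ∈ Icc 2 T, ‖w t - w (t - 1)‖ ≤ η * G := by
    rintro (_ | s) ht
    · simp at ht
    have hs : s ∈ Icc 1 T := by simp at ht ⊢; omega
    calc ‖w (s + 1) - w s‖
        = ‖ballProj d D (w s - η • g s) - w s‖ := by rw [hupd s (by simp at ht ⊢; omega)]
      _ ≤ ‖w s - η • g s - w s‖ := norm_ballProj_sub_le _ (hmem s hs)
      _ = η * ‖g s‖ := by rw [sub_sub_cancel_left, norm_neg, norm_smul, Real.norm_of_nonneg hη]
      _ ≤ η * G := mul_le_mul_of_nonneg_left (hg s hs) hη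
  simpa [Nat.card_Icc] using sum_le_card_nsmul _ _ _ hstep

theorem sum_sub_sum_le_of_ballProj_gradient_steps {f : ℕ → EuclideanSpace ℝ (Fin d) → ℝ}
    {v : EuclideanSpace ℝ (Fin d)} (hη : 0 < η) (hT : 1 ≤ T)
    (hconv : ∀ t ∈ Icc 1 T, ConvexOn ℝ Set.univ (f t))
    (hdiff : ∀ t ∈ Icc 1 T, DifferentiableAt ℝ (f t) (w t))
    (hmem : ∀ t ∈ Icc 1 T, ‖w t‖ ≤ D / 2) (hg : ∀ t ∈ Icc 1 T, ‖gradient (f t) (w t)‖ ≤ G)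
    (hv : ‖v‖ ≤ D / 2)
    (hupd : ∀ t ∈ Icc 1 (T - 1), w (t + 1) = ballProj d D (w t - η • gradient (f t) (w t))) :
    ∑ t ∈ Icc 1 T, f t (w t) - ∑ t ∈ Icc 1 T, f t v ≤ D ^ 2 / (2 * η) + T * (η * G ^ 2 / 2) := by
  have hw1 : ‖w 1 - v‖ ≤ D :=
    (norm_sub_le _ _).trans (by linarith [hmem 1 (by simp [hT])])
  have hlin : ∀ t ∈ Icc 1 T, f t (w t) - f t v ≤ ⟪gradient (f t) (w t), w t - v⟫_ℝ := by
    intro t ht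
    have := (hconv t ht).add_inner_gradient_sub_le trivial trivial (hdiff t ht) (y := v)
    rw [← neg_sub, inner_neg_right] at this
    linarith
  rw [← sum_sub_distrib]
  exact (sum_le_sum hlin).trans <| sum_inner_sub_le_of_projected_steps hη hT hw1 hg
    fun t ht => hupd t ht ▸ norm_ballProj_sub_le _ hv

end BallSteps

theorem stmt8_general (d T : ℕ) (hT : 1 ≤ T) (D G S : ℝ) (hD : 0 < D) (hG : 0 < G)
    (hSlow : D * Real.sqrt T ≤ S)
    (f : ℕ → EuclideanSpace ℝ (Fin d) → ℝ)
    (hconv : ∀ t ∈ Finset.Icc 1 T, ConvexOn ℝ Set.univ (f t))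
    (hdiff : ∀ t ∈ Finset.Icc 1 T, Differentiable ℝ (f t))
    (hgrad : ∀ t ∈ Finset.Icc 1 T,
      ∀ v ∈ Metric.closedBall (0 : EuclideanSpace ℝ (Fin d)) (D / 2), ‖gradient (f t) v‖ ≤ G)
    (η : ℝ) (hη : η = D / (G * Real.sqrt T))
    (w : ℕ → EuclideanSpace ℝ (Fin d))
    (hw1 : w 1 ∈ Metric.closedBall (0 : EuclideanSpace ℝ (Fin d)) (D / 2))
    (hupd : ∀ t ∈ Finset.Icc 1 (T - 1), w (t + 1) = ballProj d D (w t - η • gradient (f t) (w t))) :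
    (∑ t ∈ Finset.Icc 2 T, ‖w t - w (t - 1)‖ ≤ S) ∧
    (∑ t ∈ Finset.Icc 1 T, f t (w t)) -
        (⨅ v : Metric.closedBall (0 : EuclideanSpace ℝ (Fin d)) (D / 2),
          ∑ t ∈ Finset.Icc 1 T, f t (v : EuclideanSpace ℝ (Fin d))) ≤
      D * G * Real.sqrt T := by
  have hsT : 0 < Real.sqrt T := Real.sqrt_pos.mpr (by exact_mod_cast hT)
  have hη0 : 0 < η := by rw [hη]; positivity
  have hmem := norm_le_of_ballProj_steps hD.le (mem_closedBall_zero_iff.mp hw1) hupd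
  have hgw : ∀ t ∈ Icc 1 T, ‖gradient (f t) (w t)‖ ≤ G := fun t ht =>
    hgrad t ht _ (mem_closedBall_zero_iff.mpr (hmem t ht))
  constructor
  · calc ∑ t ∈ Icc 2 T, ‖w t - w (t - 1)‖
        ≤ (T - 1 : ℕ) * (η * G) := sum_norm_sub_le_of_ballProj_steps hη0.le hmem hgw hupd
      _ ≤ T * (η * G) := by gcongr; omega
      _ = D * Real.sqrt T := by rw [hη]; field_simp; rw [Real.sq_sqrt (Nat.cast_nonneg _)]
      _ ≤ S := hSlow
  · have : Nonempty (Metric.closedBall (0 : EuclideanSpace ℝ (Fin d)) (D / 2)) :=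
      ⟨⟨0, Metric.mem_closedBall_self (by positivity)⟩⟩
    have hbound : D ^ 2 / (2 * η) + T * (η * G ^ 2 / 2) = D * G * Real.sqrt T := by
      rw [hη]; field_simp; rw [Real.sq_sqrt (Nat.cast_nonneg _)]; ring
    rw [sub_le_comm, ← hbound]
    refine le_ciInf fun v => sub_le_comm.mp ?_
    exact sum_sub_sum_le_of_ballProj_gradient_steps hη0 hT hconv (fun t ht => hdiff t ht _) hmem
      hgw (mem_closedBall_zero_iff.mp v.2) hupd

/-- Online gradient descent with step size `η = D/(G√T)` on convex losses with
gradients bounded by `G` on the ball `𝒟`: if `D√T ≤ S ≤ D·T`, then the continuous switching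
constraint holds and the regret is at most `D·G·√T`. -/
theorem stmt8 (d T : ℕ) (hT : 1 ≤ T) (D G S : ℝ) (hD : 0 < D) (hG : 0 < G)
    (hSlow : D * Real.sqrt T ≤ S) (hShigh : S ≤ D * T)
    (f : ℕ → EuclideanSpace ℝ (Fin d) → ℝ)
    (hconv : ∀ t ∈ Finset.Icc 1 T, ConvexOn ℝ Set.univ (f t))
    (hdiff : ∀ t ∈ Finset.Icc 1 T, Differentiable ℝ (f t))
    (hgrad : ∀ t ∈ Finset.Icc 1 T,
      ∀ v ∈ Metric.closedBall (0 : EuclideanSpace ℝ (Fin d)) (D / 2), ‖gradient (f t) v‖ ≤ G)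
    (η : ℝ) (hη : η = D / (G * Real.sqrt T))
    (w : ℕ → EuclideanSpace ℝ (Fin d))
    (hw1 : w 1 ∈ Metric.closedBall (0 : EuclideanSpace ℝ (Fin d)) (D / 2))
    (hupd : ∀ t ∈ Finset.Icc 1 (T - 1), w (t + 1) = ballProj d D (w t - η • gradient (f t) (w t))) :
    (∑ t ∈ Finset.Icc 2 T, ‖w t - w (t - 1)‖ ≤ S) ∧
    (∑ t ∈ Finset.Icc 1 T, f t (w t)) -
        (⨅ v : Metric.closedBall (0 : EuclideanSpace ℝ (Fin d)) (D / 2),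
          ∑ t ∈ Finset.Icc 1 T, f t (v : EuclideanSpace ℝ (Fin d))) ≤
      D * G * Real.sqrt T :=
  stmt8_general d T hT D G S hD hG hSlow f hconv hdiff hgrad η hη w hw1 hupd
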